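/- Let B : H ⇉ H be maximally monotone, y ∈ H, x := J_B(y). If J_B is directionally differentiable at y, then B is proto-differentiable at x relative to y - x, the resolvent of the proto-derivative D_pB(x|y-x) equals the single-valued map h ↦ J_B'(y; h) defined on all of H, and hence D_pB(x|y-x) is maximally monotone. -/

import Mathlib

variable {H : Type*} [NormedAddCommGroup H] [InnerProductSpace ℝ H]

/-- A set `G ⊆ H × H` (the graph of a set-valued operator) is monotone. -/
def IsMonotoneSet (G : Set (H × H)) : Prop :=
  ∀ p ∈ G, ∀ q ∈ G, (inner ℝ (p.2 - q.2) (p.1 - q.1) : ℝ) ≥ 0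

/-- A set `G ⊆ H × H` is maximally monotone. -/
def IsMaxMonotoneSet (G : Set (H × H)) : Prop :=
  IsMonotoneSet G ∧ ∀ G' : Set (H × H), IsMonotoneSet G' → G ⊆ G' → G' = G


open Filter

/-- Graphical (Kuratowski) convergence of a `τ`-indexed family of graphs
`Δ τ ⊆ H × H` to a set `D` as `τ ↘ 0`. -/
def GraphConvTo {H : Type*} [NormedAddCommGroup H]
    (Δ : ℝ → Set (H × H)) (D : Set (H × H)) : Prop :=
  -- inner limit: every point of D is attained along every sequence τₖ ↘ 0
  (∀ p ∈ D, ∀ τk : ℕ → ℝ, (∀ k, 0 < τk k) → Tendsto τk atTop (nhds 0) →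
    ∃ pk : ℕ → H × H, (∀ k, pk k ∈ Δ (τk k)) ∧ Tendsto pk atTop (nhds p)) ∧
  -- outer limit: every graphical limit point lies in D
  (∀ (τk : ℕ → ℝ), (∀ k, 0 < τk k) → Tendsto τk atTop (nhds 0) →
    ∀ pk : ℕ → H × H, (∀ k, pk k ∈ Δ (τk k)) →
    ∀ p : H × H, Tendsto pk atTop (nhds p) → p ∈ D)

/-- The difference-quotient graphs of `B` (with graph `G`) at `x` relative to `v`:
`(h, w) ∈ Δ τ` iff `(x + τ h, v + τ w) ∈ G`. -/
def protoQuot {H : Type*} [NormedAddCommGroup H] [Module ℝ H]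
    (G : Set (H × H)) (x v : H) (τ : ℝ) : Set (H × H) :=
  {p : H × H | (x + τ • p.1, v + τ • p.2) ∈ G}

/-!
For `τ > 0` the difference-quotient graph of `B` at `(J y, y - J y)` is again monotone, and it is
the graph of `T_τ⁻¹ - Id` for the everywhere defined map `T_τ h = τ⁻¹ (J (y + τ h) - J y)`.
Monotonicity of such a graph means that `T_τ` is firmly nonexpansive, so the `T_τ` are
uniformly `1`-Lipschitz and converge pointwise to `J'(y; ·)`. Equicontinuity upgrades pointwise
convergence to graphical convergence of the graphs of `T_τ⁻¹ - Id` to that of `J'(y; ·)⁻¹ - Id`,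
firm nonexpansiveness passes to the limit, and a monotone graph of `T⁻¹ - Id` with `T` total is
maximal.
-/

open Topology Set
open scoped NNReal

/-- The graph of `T⁻¹ - Id`, the operator whose resolvent is `T`. -/
def resolventGraph {E : Type*} [AddCommGroup E] (T : E → E) : Set (E × E) :=
  range fun a => (T a, a - T a)

theorem mem_resolventGraph {E : Type*} [AddCommGroup E] {T : E → E} {p : E × E} :
    p ∈ resolventGraph T ↔ p.1 = T (p.1 + p.2) := by
  constructor
  · rintro ⟨a, rfl⟩
    simp
  · intro hp
    exact ⟨p.1 + p.2, Prod.ext hp.symm (by simp [← hp])⟩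

theorem Filter.Tendsto.apply_of_lipschitzWith {α β ι : Type*} [PseudoMetricSpace α]
    [PseudoMetricSpace β] {l : Filter ι} {F : ι → α → β} {K : ℝ≥0}
    (hF : ∀ᶠ i in l, LipschitzWith K (F i)) {x : ι → α} {a : α} {b : β}
    (hx : Tendsto x l (𝓝 a)) (hFa : Tendsto (fun i => F i a) l (𝓝 b)) :
    Tendsto (fun i => F i (x i)) l (𝓝 b) := by
  rw [tendsto_iff_dist_tendsto_zero] at hx hFa ⊢
  have hbound : ∀ᶠ i in l, dist (F i (x i)) b ≤ K * dist (x i) a + dist (F i a) b :=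
    hF.mono fun i hi => (dist_triangle _ _ _).trans (add_le_add_left (hi.dist_le_mul _ _) _)
  refine squeeze_zero' (.of_forall fun _ => dist_nonneg) hbound ?_
  simpa using (hx.const_mul (K : ℝ)).add hFa

theorem protoQuot_resolventGraph {E : Type*} [NormedAddCommGroup E] [Module ℝ E]
    (J : E → E) (y : E) {τ : ℝ} (hτ : τ ≠ 0) :
    protoQuot (resolventGraph J) (J y) (y - J y) τ =
      resolventGraph fun h => τ⁻¹ • (J (y + τ • h) - J y) := by
  ext p
  have hsum : J y + τ • p.1 + (y - J y + τ • p.2) = y + τ • (p.1 + p.2) := by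
    rw [smul_add]; abel
  simp only [protoQuot, mem_ofPred_eq, mem_resolventGraph, hsum]
  rw [eq_inv_smul_iff₀ hτ, eq_sub_iff_add_eq', eq_comm]

theorem graphConvTo_resolventGraph {E : Type*} [NormedAddCommGroup E] {Δ : ℝ → Set (E × E)}
    {F : ℝ → E → E} {T : E → E} {K : ℝ≥0}
    (hΔ : ∀ τ, 0 < τ → Δ τ = resolventGraph (F τ)) (hF : ∀ τ, 0 < τ → LipschitzWith K (F τ))
    (hT : ∀ a, Tendsto (fun τ => F τ a) (𝓝[>] 0) (𝓝 (T a))) :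
    GraphConvTo Δ (resolventGraph T) := by
  have hwithin : ∀ τk : ℕ → ℝ, (∀ k, 0 < τk k) → Tendsto τk atTop (𝓝 0) →
      Tendsto τk atTop (𝓝[>] 0) := fun τk hpos h0 =>
    tendsto_nhdsWithin_iff.2 ⟨h0, .of_forall hpos⟩
  refine ⟨?_, ?_⟩
  · rintro _ ⟨a, rfl⟩ τk hpos h0
    have hFa := (hT a).comp (hwithin τk hpos h0)
    exact ⟨fun k => (F (τk k) a, a - F (τk k) a), fun k => hΔ _ (hpos k) ▸ mem_range_self a,
      hFa.prodMk_nhds (tendsto_const_nhds.sub hFa)⟩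
  · intro τk hpos h0 pk hpk p hp
    have hfst : ∀ k, F (τk k) ((pk k).1 + (pk k).2) = (pk k).1 := fun k =>
      (mem_resolventGraph.1 (hΔ _ (hpos k) ▸ hpk k)).symm
    refine mem_resolventGraph.2 (tendsto_nhds_unique hp.fst_nhds ?_)
    exact .congr hfst (.apply_of_lipschitzWith (.of_forall fun k => hF _ (hpos k))
      (hp.fst_nhds.add hp.snd_nhds) ((hT _).comp (hwithin τk hpos h0)))

theorem isMonotoneSet_resolventGraph_iff {T : H → H} :
    IsMonotoneSet (resolventGraph T) ↔
      ∀ a b, (inner ℝ ((a - T a) - (b - T b)) (T a - T b) : ℝ) ≥ 0 := by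
  simp only [IsMonotoneSet, resolventGraph, forall_mem_range]

theorem IsMonotoneSet.fst_eq_of_add_eq {G : Set (H × H)} (hG : IsMonotoneSet G)
    {p q : H × H} (hp : p ∈ G) (hq : q ∈ G) (hpq : p.1 + p.2 = q.1 + q.2) : p.1 = q.1 := by
  have hmono := hG p hp q hq
  have hsnd : p.2 - q.2 = -(p.1 - q.1) := by
    rw [neg_sub, sub_eq_sub_iff_add_eq_add, add_comm, hpq]
  rw [hsnd, inner_neg_left, real_inner_self_eq_norm_sq] at hmono
  rw [← sub_eq_zero, ← norm_eq_zero]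
  exact pow_eq_zero_iff two_ne_zero |>.mp (by linarith [sq_nonneg ‖p.1 - q.1‖])

theorem IsMonotoneSet.eq_resolventGraph {G : Set (H × H)} (hG : IsMonotoneSet G) {J : H → H}
    (hJ : ∀ z, (J z, z - J z) ∈ G) : G = resolventGraph J := by
  refine Subset.antisymm (fun p hp => mem_resolventGraph.2 ?_) (range_subset_iff.2 hJ)
  exact hG.fst_eq_of_add_eq hp (hJ _) (by simp)

theorem IsMonotoneSet.protoQuot {G : Set (H × H)} (hG : IsMonotoneSet G) (x v : H) {τ : ℝ}
    (hτ : τ ≠ 0) : IsMonotoneSet (protoQuot G x v τ) := by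
  intro p hp q hq
  have hmono := hG _ hp _ hq
  simp only [add_sub_add_left_eq_sub, ← smul_sub, real_inner_smul_left, real_inner_smul_right,
    ← mul_assoc] at hmono
  exact (mul_nonneg_iff_of_pos_left (mul_self_pos.2 hτ)).1 hmono

theorem lipschitzWith_one_of_isMonotoneSet_resolventGraph {T : H → H}
    (hT : IsMonotoneSet (resolventGraph T)) : LipschitzWith 1 T := by
  refine LipschitzWith.of_dist_le_mul fun a b => ?_
  rw [NNReal.coe_one, one_mul, dist_eq_norm, dist_eq_norm]
  have hfirm : ‖T a - T b‖ ^ 2 ≤ inner ℝ (a - b) (T a - T b) := by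
    have hmono := isMonotoneSet_resolventGraph_iff.1 hT a b
    rw [show a - T a - (b - T b) = (a - b) - (T a - T b) by abel, inner_sub_left,
      real_inner_self_eq_norm_sq] at hmono
    linarith
  have hcs := real_inner_le_norm (a - b) (T a - T b)
  nlinarith [norm_nonneg (T a - T b), norm_nonneg (a - b)]

theorem isMonotoneSet_resolventGraph_of_tendsto {ι : Type*} {l : Filter ι} [l.NeBot]
    {F : ι → H → H} {T : H → H} (hF : ∀ᶠ i in l, IsMonotoneSet (resolventGraph (F i)))
    (hT : ∀ a, Tendsto (fun i => F i a) l (𝓝 (T a))) : IsMonotoneSet (resolventGraph T) := by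
  simp only [isMonotoneSet_resolventGraph_iff] at hF ⊢
  intro a b
  refine ge_of_tendsto ?_ (hF.mono fun i hi => hi a b)
  exact ((tendsto_const_nhds.sub (hT a)).sub (tendsto_const_nhds.sub (hT b))).inner
    ((hT a).sub (hT b))

theorem isMaxMonotoneSet_resolventGraph {T : H → H} (hT : IsMonotoneSet (resolventGraph T)) :
    IsMaxMonotoneSet (resolventGraph T) := by
  refine ⟨hT, fun G' hG' hsub => Subset.antisymm (fun p hp => mem_resolventGraph.2 ?_) hsub⟩
  exact hG'.fst_eq_of_add_eq hp (hsub (mem_range_self (p.1 + p.2))) (by simp)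

theorem directional_diff_implies_proto_diff_general
    (G : Set (H × H)) (hG : IsMaxMonotoneSet G)
    (J : H → H) (hJ : ∀ z : H, (J z, z - J z) ∈ G)
    (y : H) (x : H) (hx : x = J y)
    (D' : H → H)
    (hdiff : ∀ h : H, Tendsto (fun τ : ℝ => τ⁻¹ • (J (y + τ • h) - J y))
      (nhdsWithin 0 (Set.Ioi 0)) (nhds (D' h))) :
    ∃ D : Set (H × H),
      GraphConvTo (protoQuot G x (y - x)) D ∧
      (∀ h w : H, (w, h - w) ∈ D ↔ w = D' h) ∧
      IsMaxMonotoneSet D := by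
  have hquot : ∀ τ : ℝ, 0 < τ → protoQuot G x (y - x) τ =
      resolventGraph fun h => τ⁻¹ • (J (y + τ • h) - J y) := fun τ hτ => by
    rw [hx, hG.1.eq_resolventGraph hJ, protoQuot_resolventGraph J y hτ.ne']
  have hmono : ∀ τ : ℝ, 0 < τ →
      IsMonotoneSet (resolventGraph fun h => τ⁻¹ • (J (y + τ • h) - J y)) :=
    fun τ hτ => hquot τ hτ ▸ hG.1.protoQuot x (y - x) hτ.ne'
  have hD'mono : IsMonotoneSet (resolventGraph D') :=
    isMonotoneSet_resolventGraph_of_tendsto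
      ((eventually_mem_nhdsWithin (s := Ioi 0) (a := 0)).mono hmono) hdiff
  refine ⟨resolventGraph D', graphConvTo_resolventGraph hquot
    (fun τ hτ => lipschitzWith_one_of_isMonotoneSet_resolventGraph (hmono τ hτ)) hdiff,
    fun h w => ?_, isMaxMonotoneSet_resolventGraph hD'mono⟩
  rw [mem_resolventGraph, add_sub_cancel]

/-- If the resolvent `J_B` of a maximally monotone `B` is directionally differentiable
at `y`, then `B` is proto-differentiable at `x = J_B(y)` relative to `y - x`, the
resolvent of the proto-derivative is the single-valued map `h ↦ J_B'(y; h)` defined on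
all of `H`, and the proto-derivative is maximally monotone. -/
theorem directional_diff_implies_proto_diff
    [CompleteSpace H] (G : Set (H × H)) (hG : IsMaxMonotoneSet G)
    (J : H → H) (hJ : ∀ z : H, (J z, z - J z) ∈ G)
    (y : H) (x : H) (hx : x = J y)
    (D' : H → H)
    (hdiff : ∀ h : H, Tendsto (fun τ : ℝ => τ⁻¹ • (J (y + τ • h) - J y))
      (nhdsWithin 0 (Set.Ioi 0)) (nhds (D' h))) :
    ∃ D : Set (H × H),
      GraphConvTo (protoQuot G x (y - x)) D ∧
      (∀ h w : H, (w, h - w) ∈ D ↔ w = D' h) ∧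
      IsMaxMonotoneSet D :=
  directional_diff_implies_proto_diff_general G hG J hJ y x hx D' hdiff
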